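/- arXiv:2008.07504 — 3 statements merged into one kernel-verified Lean document; each statement's English description precedes it below -/
import Mathlib

section
/- Let R ≥ 1 and N ≥ 2 be natural numbers, let q = ⌈R/(N−1)⌉ and r = R − (q−1)·(N−1) (so 1 ≤ r ≤ N−1). Then the total count (q−1)·N + (r + 1) equals ⌈R·N/(N−1)⌉. (This is the exact number of symbols the leader downloads from a single client with N databases in the proposed scheme: each of the first q−1 full batches costs N downloads, and the last batch of r desired indices costs r+1 downloads.) -/
/-! Substituting `r`, the count telescopes to `q + R`. On the other side
`R·N/(N − 1) = R/(N − 1) + R`, and the ceiling commutes with adding the integer `R`. -/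

theorem mul_div_sub_one_eq_div_sub_one_add {K : Type*} [Field K] (a : K) {x : K} (hx : x ≠ 1) :
    a * x / (x - 1) = a / (x - 1) + a := by
  have hx' : x - 1 ≠ 0 := sub_ne_zero.mpr hx
  field_simp
  ring

theorem Int.ceil_natCast_mul_div_sub_one {K : Type*} [Field K] [LinearOrder K] [IsStrictOrderedRing K]
    [FloorRing K] (n : ℕ) {x : K} (hx : x ≠ 1) :
    ⌈(n : K) * x / (x - 1)⌉ = ⌈(n : K) / (x - 1)⌉ + n := by
  rw [mul_div_sub_one_eq_div_sub_one_add _ hx, Int.ceil_add_natCast]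

theorem mp_psi_per_client_download_count_general (R N : ℕ) (hN : 2 ≤ N)
    (q r : ℤ) (hq : q = ⌈(R : ℚ) / ((N : ℚ) - 1)⌉)
    (hr : r = (R : ℤ) - (q - 1) * ((N : ℤ) - 1)) :
    (q - 1) * N + (r + 1) = ⌈((R : ℚ) * N) / ((N : ℚ) - 1)⌉ := by
  have hN_ne_one : (N : ℚ) ≠ 1 := by exact_mod_cast (by omega : N ≠ 1)
  rw [Int.ceil_natCast_mul_div_sub_one R hN_ne_one, ← hq, hr]
  ring

/-- Let `R ≥ 1`, `N ≥ 2`, `q = ⌈R/(N−1)⌉` and `r = R − (q−1)·(N−1)`.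
Then `(q−1)·N + (r + 1) = ⌈R·N/(N−1)⌉`. -/
theorem mp_psi_per_client_download_count (R N : ℕ) (hR : 1 ≤ R) (hN : 2 ≤ N)
    (q r : ℤ) (hq : q = ⌈(R : ℚ) / ((N : ℚ) - 1)⌉)
    (hr : r = (R : ℤ) - (q - 1) * ((N : ℤ) - 1)) :
    (q - 1) * N + (r + 1) = ⌈((R : ℚ) * N) / ((N : ℚ) - 1)⌉ :=
  mp_psi_per_client_download_count_general R N hN q r hq hr
end

section
/- Let L be a prime, let M ≥ 2 with L ≥ M, let c be a nonzero element of the field Z/LZ, and let x_1, …, x_{M−1} be elements of Z/LZ each equal to 0 or 1. Then c·(x_1 + ⋯ + x_{M−1} + (L − (M−1))) = 0 in Z/LZ if and only if x_i = 1 for all i = 1, …, M−1. -/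
/-- Over `Z/LZ` with `L` prime, `L ≥ M ≥ 2`: for nonzero `c` and `x₁,…,x_{M−1}`
each `0` or `1`, `c·(x₁ + ⋯ + x_{M−1} + (L − (M−1))) = 0` iff all `xᵢ = 1`. -/
theorem mp_psi_indicator_zero_iff (L M : ℕ) (hL : L.Prime) (hM : 2 ≤ M) (hML : M ≤ L)
    (c : ZMod L) (hc : c ≠ 0)
    (x : Fin (M - 1) → ZMod L) (hx : ∀ i, x i = 0 ∨ x i = 1) :
    c * ((∑ i, x i) + ((L - (M - 1) : ℕ) : ZMod L)) = 0 ↔ ∀ i, x i = 1 := by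
  haveI : Fact L.Prime := ⟨hL⟩
  have hM1L : M - 1 < L := lt_of_lt_of_le (Nat.sub_lt (by omega) one_pos) hML
  -- choose nat representatives
  have hn : ∀ i, ∃ n : ℕ, n ≤ 1 ∧ x i = (n : ZMod L) := by
    intro i
    rcases hx i with h | h
    · exact ⟨0, by simp [h]⟩
    · exact ⟨1, by simp [h]⟩
  choose n hn1 hnx using hn
  rw [mul_eq_zero]
  have hcast : ((L - (M - 1) : ℕ) : ZMod L) = -((M - 1 : ℕ) : ZMod L) := by
    rw [Nat.cast_sub (le_of_lt hM1L), ZMod.natCast_self]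
    ring
  have hsum : (∑ i, x i) = ((∑ i, n i : ℕ) : ZMod L) := by
    push_cast
    exact Finset.sum_congr rfl fun i _ => hnx i
  have hle : (∑ i, n i) ≤ M - 1 := by
    calc (∑ i, n i) ≤ ∑ _i : Fin (M - 1), 1 :=
          Finset.sum_le_sum fun i _ => hn1 i
      _ = M - 1 := by simp
  constructor
  · rintro (h | h)
    · exact absurd h hc
    · rw [hsum, hcast] at h
      have hnat : (∑ i, n i) = M - 1 := by
        have := eq_of_sub_eq_zero (by linear_combination h : ((∑ i, n i : ℕ) : ZMod L) - ((M - 1 : ℕ) : ZMod L) = 0)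
        have hv := congrArg ZMod.val this
        rwa [ZMod.val_natCast_of_lt (lt_of_le_of_lt hle hM1L),
          ZMod.val_natCast_of_lt hM1L] at hv
      intro i
      by_contra hne
      have hni : n i = 0 := by
        have := hn1 i
        interval_cases h' : n i
        · rfl
        · exact absurd (by rw [hnx i, h']; norm_num) hne
      have hlt : (∑ j, n j) < ∑ _j : Fin (M - 1), 1 :=
        Finset.sum_lt_sum (fun j _ => hn1 j) ⟨i, Finset.mem_univ i, by omega⟩
      simp only [Finset.sum_const, Finset.card_univ, Fintype.card_fin, smul_eq_mul, mul_one] at hlt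
      omega
  · intro h
    right
    rw [hsum, hcast]
    have : ∀ i, n i = 1 := by
      intro i
      have := hn1 i
      interval_cases h' : n i
      · exfalso
        have := h i
        rw [hnx i, h'] at this
        rw [Nat.cast_zero] at this
        exact one_ne_zero this.symm
      · rfl
    have : (∑ i, n i) = M - 1 := by
      rw [Finset.sum_congr rfl fun i _ => this i]
      simp
    rw [this]
    ring
end

section
/- Fix a prime L, naturals M ≥ 2 and K with L ≥ M, a nonzero c ∈ Z/LZ, a vector h : Fin K → Z/LZ, an index k ∈ Fin K, scalars s_1, …, s_{M−1} ∈ Z/LZ, and scalars t_1, …, t_{M−1} ∈ Z/LZ satisfying Σ_{i=1}^{M−1} t_i = −(M−1) in Z/LZ. Let X_1, …, X_{M−1} : Fin K → Z/LZ be vectors with every entry 0 or 1, and define for each i the answers A_i = c·(⟨X_i, h⟩ + s_i) and A_i' = c·(⟨X_i, h + e_k⟩ + s_i + t_i), where ⟨X, q⟩ = Σ_j X_j q_j and e_k is 1 at position k and 0 elsewhere. Then Σ_{i=1}^{M−1} (A_i' − A_i) = 0 in Z/LZ if and only if X_{i,k} = 1 for every i = 1, …, M−1. -/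
/-- Reliability of the MP-PSI scheme: with `L` prime, `L ≥ M ≥ 2`, nonzero global
randomness `c`, local randomness `s i`, and correlated individual randomness `t i`
with `Σ_i t i = −(M−1)` in `Z/LZ`, for `{0,1}`-valued incidence vectors `X i`, the
aggregated statistic `Σ_i (A'_i − A_i)` vanishes iff `X i k = 1` for all `i`, where
`A_i = c·(⟨X i, h⟩ + s i)` and `A'_i = c·(⟨X i, h + e_k⟩ + s i + t i)`. -/
theorem mp_psi_reliability (L M K : ℕ) (hL : L.Prime) (hM : 2 ≤ M) (hML : M ≤ L)
    (c : ZMod L) (hc : c ≠ 0) (h : Fin K → ZMod L) (k : Fin K)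
    (s t : Fin (M - 1) → ZMod L) (ht : ∑ i, t i = -((M - 1 : ℕ) : ZMod L))
    (X : Fin (M - 1) → Fin K → ZMod L) (hX : ∀ i j, X i j = 0 ∨ X i j = 1)
    (A A' : Fin (M - 1) → ZMod L)
    (hA : ∀ i, A i = c * ((∑ j, X i j * h j) + s i))
    (hA' : ∀ i, A' i =
      c * ((∑ j, X i j * ((h + Pi.single k (1 : ZMod L)) : Fin K → ZMod L) j)
        + s i + t i)) :
    (∑ i, (A' i - A i)) = 0 ↔ ∀ i, X i k = 1 := by
  haveI := Fact.mk hL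
  have key : ∀ i, A' i - A i = c * (X i k + t i) := by
    intro i
    rw [hA, hA']
    have e1 : (∑ j, X i j * ((h + Pi.single k (1 : ZMod L)) : Fin K → ZMod L) j)
        = (∑ j, X i j * h j) + X i k := by
      have : ∀ j, X i j * ((h + Pi.single k (1 : ZMod L)) : Fin K → ZMod L) j
          = X i j * h j + X i j * (Pi.single k (1 : ZMod L) : Fin K → ZMod L) j := by
        intro j; simp [Pi.add_apply, mul_add]
      rw [Finset.sum_congr rfl fun j _ => this j, Finset.sum_add_distrib]
      congr 1
      simp [Pi.single_apply, mul_ite, Finset.sum_ite_eq']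
    rw [e1]; ring
  rw [Finset.sum_congr rfl fun i _ => key i, ← Finset.mul_sum]
  have hsum : (∑ i, (X i k + t i)) = (∑ i, X i k) - ((M - 1 : ℕ) : ZMod L) := by
    rw [Finset.sum_add_distrib, ht]; ring
  rw [hsum, mul_eq_zero]
  have hML1 : M - 1 < L := lt_of_lt_of_le (Nat.sub_lt (by omega) one_pos) hML
  have hcard : Fintype.card (Fin (M - 1)) = M - 1 := Fintype.card_fin _
  have hSc : (∑ i, X i k)
      = ((Finset.univ.filter (fun i => X i k = 1)).card : ZMod L) := by
    rw [← Finset.sum_boole]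
    refine Finset.sum_congr rfl fun i _ => ?_
    rcases hX i k with h0 | h1
    · rw [h0]; simp [h0]
    · rw [h1]; simp [h1]
  constructor
  · rintro (h0 | h0)
    · exact absurd h0 hc
    · have hS : (∑ i, X i k) = ((M - 1 : ℕ) : ZMod L) := by
        have := sub_eq_zero.mp h0; exact this
      rw [hSc] at hS
      have hc1 : (Finset.univ.filter (fun i => X i k = 1)).card < L :=
        lt_of_le_of_lt (le_trans (Finset.card_filter_le _ _)
          (le_of_eq (by simp [hcard]))) hML1
      have hval := congrArg ZMod.val hS
      rw [ZMod.val_natCast_of_lt hc1, ZMod.val_natCast_of_lt hML1] at hval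
      have heq : (Finset.univ.filter (fun i => X i k = 1))
          = (Finset.univ : Finset (Fin (M - 1))) := by
        apply Finset.eq_univ_of_card
        rw [hval, hcard]
      intro i
      have : i ∈ Finset.univ.filter (fun i => X i k = 1) := by
        rw [heq]; exact Finset.mem_univ i
      exact (Finset.mem_filter.mp this).2
  · intro hall
    right
    rw [hSc]
    have : (Finset.univ.filter (fun i => X i k = 1)) = Finset.univ :=
      Finset.filter_true_of_mem fun i _ => hall i
    rw [this, Finset.card_univ, hcard, sub_self]
end
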